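/- arXiv:1606.06865 — 4 statements merged into one kernel-verified Lean document; each statement's English description precedes it below -/
import Mathlib

section
/- For non-negative integers d, f and positive integer n, the sum over i from 1 to n of (i-1)^{\underline{d}} · i^{\overline{f}} equals (1/(f+d+1)) · (n-1)^{\underline{d}} · n^{\overline{f+1}}, where x^{\underline{k}} denotes the falling factorial and x^{\overline{k}} denotes the rising factorial. -/
/-!
The summand is, up to the factor `f + d + 1`, the forward difference of
`x ↦ (x - 1)^{\underline{d}} · x^{\overline{f+1}}`, so the sum telescopes; the boundary term at
`x = 0` vanishes because `0^{\overline{f+1}} = 0`.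
-/

open Finset

/-- Rising factorial `x^{\overline{k}} = x(x+1)⋯(x+k-1)`. -/
noncomputable def risingFac (x : ℝ) (k : ℕ) : ℝ := ∏ j ∈ Finset.range k, (x + j)

/-- Falling factorial `x^{\underline{k}} = x(x-1)⋯(x-k+1)`. -/
noncomputable def fallingFac (x : ℝ) (k : ℕ) : ℝ := ∏ j ∈ Finset.range k, (x - j)

lemma risingFac_succ (x : ℝ) (k : ℕ) : risingFac x (k + 1) = risingFac x k * (x + k) :=
  prod_range_succ _ _

lemma risingFac_succ' (x : ℝ) (k : ℕ) : risingFac x (k + 1) = x * risingFac (x + 1) k := by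
  rw [risingFac, prod_range_succ', mul_comm, risingFac]
  push_cast
  simp only [add_zero, add_assoc, add_comm (1 : ℝ)]

lemma fallingFac_succ (x : ℝ) (k : ℕ) : fallingFac x (k + 1) = fallingFac x k * (x - k) :=
  prod_range_succ _ _

lemma fallingFac_succ' (x : ℝ) (k : ℕ) : fallingFac x (k + 1) = x * fallingFac (x - 1) k := by
  rw [fallingFac, prod_range_succ', mul_comm, fallingFac]
  push_cast
  simp only [sub_zero, sub_add_eq_sub_sub, sub_right_comm _ (1 : ℝ)]

lemma risingFac_zero_succ (k : ℕ) : risingFac 0 (k + 1) = 0 := by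
  rw [risingFac_succ', zero_mul]

lemma fallingFac_mul_risingFac_sub (x : ℝ) (d f : ℕ) :
    fallingFac x d * risingFac (x + 1) (f + 1) - fallingFac (x - 1) d * risingFac x (f + 1)
      = ((f : ℝ) + d + 1) * (fallingFac x d * risingFac (x + 1) f) := by
  have hfall : x * fallingFac (x - 1) d = fallingFac x d * (x - d) := by
    rw [← fallingFac_succ', fallingFac_succ]
  rw [risingFac_succ (x + 1), risingFac_succ' x]
  linear_combination (-risingFac (x + 1) f) * hfall

lemma mul_sum_fallingFac_mul_risingFac (d f n : ℕ) :
    ((f : ℝ) + d + 1) * ∑ i ∈ Icc 1 n, fallingFac ((i : ℝ) - 1) d * risingFac (i : ℝ) f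
      = fallingFac ((n : ℝ) - 1) d * risingFac (n : ℝ) (f + 1) := by
  induction n with
  | zero => simp [risingFac_zero_succ]
  | succ n ih =>
    rw [sum_Icc_succ_top (Nat.le_add_left 1 n), mul_add, ih]
    have step := fallingFac_mul_risingFac_sub (n : ℝ) d f
    push_cast
    rw [add_sub_cancel_right]
    linear_combination -step

theorem stmt_0_general (d f n : ℕ) :
    ∑ i ∈ Finset.Icc 1 n, fallingFac ((i : ℝ) - 1) d * risingFac (i : ℝ) f
      = (1 / ((f : ℝ) + d + 1)) * fallingFac ((n : ℝ) - 1) d * risingFac (n : ℝ) (f + 1) := by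
  have hK : ((f : ℝ) + d + 1) ≠ 0 := by positivity
  rw [mul_assoc, ← mul_sum_fallingFac_mul_risingFac, one_div, inv_mul_cancel_left₀ hK]

theorem stmt_0 (d f n : ℕ) (hn : 0 < n) :
    ∑ i ∈ Finset.Icc 1 n, fallingFac ((i : ℝ) - 1) d * risingFac (i : ℝ) f
      = (1 / ((f : ℝ) + d + 1)) * fallingFac ((n : ℝ) - 1) d * risingFac (n : ℝ) (f + 1) :=
  stmt_0_general d f n
end

section
/- Let a be an odd natural number. Then the sum over b from 0 to a of binomial((a−1)/2, b) · (−1)^b / (2b+1) equals √π · ((a−1)/2)! / (2 · Γ(a/2 + 1)). -/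
/-!
Write `a = 2m + 1` and `S_m(x) = ∑_b (-1)^b C(m,b) / (x + b)`; the sum is `S_m(1/2) / 2`. For real
`x > 0`, `S_m(x)` is the Beta value `Γ(x) m! / Γ(x + m + 1)`: Pascal's rule gives
`S_{m+1}(x) = S_m(x) - S_m(x + 1)`, and `Γ(s + 1) = s Γ(s)` shows the right side obeys the same
recurrence.
-/

open Finset

theorem sum_range_succ_choose_mul_neg_one_pow_mul {R : Type*} [CommRing R] (f : ℕ → R) (m : ℕ) :
    ∑ b ∈ range (m + 2), ((m + 1).choose b : R) * (-1) ^ b * f b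
      = ∑ b ∈ range (m + 1), (m.choose b : R) * (-1) ^ b * (f b - f (b + 1)) := by
  simp only [mul_assoc]
  rw [sum_choose_succ_mul (fun b _ => (-1) ^ b * f b)]
  simp [mul_sub, pow_succ, ← sub_eq_add_neg]

namespace Real

theorem sum_range_choose_mul_neg_one_pow_div_add {x : ℝ} (hx : 0 < x) (m : ℕ) :
    ∑ b ∈ range (m + 1), (m.choose b : ℝ) * (-1) ^ b / (x + b)
      = Gamma x * m.factorial / Gamma (x + (m + 1)) := by
  induction m generalizing x with
  | zero =>
    have hΓx := (Gamma_pos_of_pos hx).ne'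
    simp only [zero_add, range_one, sum_singleton, Nat.choose_self, Nat.cast_one, pow_zero, mul_one,
      CharP.cast_eq_zero, add_zero, one_div, Nat.factorial_zero, Gamma_add_one hx.ne']
    field_simp
  | succ m ih =>
    simp_rw [div_eq_mul_inv] at ih ⊢
    rw [sum_range_succ_choose_mul_neg_one_pow_mul]
    simp only [mul_sub, sum_sub_distrib, Nat.cast_succ, ← add_assoc, add_right_comm x _ 1]
    rw [ih hx, ih (by positivity), Gamma_add_one hx.ne',
      show x + 1 + (m + 1 : ℝ) = x + (m + 1) + 1 by ring, show x + 1 + m + 1 = x + (m + 1) + 1 by ring,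
      Gamma_add_one (by positivity), Nat.factorial_succ]
    have hΓ := (Gamma_pos_of_pos (show 0 < x + (m + 1) by positivity)).ne'
    push_cast
    field_simp
    ring

end Real

theorem stmt_3 (a : ℕ) (ha : Odd a) :
    ∑ b ∈ Finset.range (a + 1), (((a - 1) / 2 : ℕ).choose b : ℝ) * (-1) ^ b / (2 * b + 1)
      = Real.sqrt Real.pi * ((((a - 1) / 2 : ℕ).factorial : ℝ))
        / (2 * Real.Gamma ((a : ℝ) / 2 + 1)) := by
  obtain ⟨m, rfl⟩ := ha
  have hm : (2 * m + 1 - 1) / 2 = m := by omega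
  have htrunc : ∑ b ∈ range (2 * m + 1 + 1), (m.choose b : ℝ) * (-1) ^ b / (2 * b + 1)
      = ∑ b ∈ range (m + 1), (m.choose b : ℝ) * (-1) ^ b / (2 * b + 1) :=
    (sum_subset (range_subset_range.2 (by omega)) fun b _ hb => by
      simp [Nat.choose_eq_zero_of_lt (not_lt.1 (mem_range.not.1 hb))]).symm
  have hhalf : ∀ b : ℕ, (m.choose b : ℝ) * (-1) ^ b / (2 * b + 1)
      = (m.choose b : ℝ) * (-1) ^ b / (1 / 2 + b) / 2 := fun b => by
    field_simp
    ring
  rw [hm, htrunc, sum_congr rfl fun b _ => hhalf b, ← sum_div,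
    Real.sum_range_choose_mul_neg_one_pow_div_add one_half_pos, Real.Gamma_one_half_eq,
    show ((2 * m + 1 : ℕ) : ℝ) / 2 + 1 = 1 / 2 + (m + 1) by push_cast; ring]
  ring
end

section
/- Let a be an odd natural number. Then Σ_{j=0}^{a} binomial(a,j) · (−1)^{j+1} · Σ_{k=1}^{j} ((j−k)(j+k))^{(a−1)/2} = a! · √π · ((a−1)/2)! / (2 · Γ(a/2 + 1)). -/
/-!
Write `a = 2m + 1` and `f j = ∑_{k=1}^{j} (j² - k²)^m`. Expanding `(j² - k²)^m` binomially and
summing each `k^{2i}` by Faulhaber's formula shows that `f` is a polynomial in `j` of degree at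
most `2m + 1`, with coefficient `c_m = ∑_i (-1)^i C(m,i) / (2i + 1)` in degree `2m + 1`. Since `a`
is odd, the left-hand side is the `a`-th forward difference of `f` at `0`, which equals `a! c_m`.
Finally `c_m` is half the value at `x = 1/2` of the partial fraction expansion
`∑_i (-1)^i C(m,i) / (x + i) = m! / ∏_{i ≤ m} (x + i)`,
and `Γ(m + 3/2) = √π ∏_{i ≤ m} (1/2 + i)`.
-/

open Finset Nat Polynomial

theorem Polynomial.sum_range_neg_one_pow_mul_choose_mul_eval {R : Type*} [CommRing R]
    (P : R[X]) {n : ℕ} (hP : P.natDegree ≤ n) :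
    ∑ j ∈ range (n + 1), (-1) ^ (n - j) * (n.choose j : R) * P.eval (j : R)
      = n ! * P.coeff n := by
  have hΔ : (fwdDiff 1)^[n] P.eval 0 = n ! * P.coeff n := by
    rcases hP.lt_or_eq with hlt | rfl
    · simp [fwdDiff_iter_eq_zero_of_degree_lt hlt, coeff_eq_zero_of_natDegree_lt hlt]
    · simp [fwdDiff_iter_degree_eq_factorial, mul_comm]
  rw [← hΔ, fwdDiff_iter_eq_sum_shift]
  simp [zsmul_eq_mul]

theorem sum_range_neg_one_pow_mul_choose_div {K : Type*} [Field K] (m : ℕ) {x : K}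
    (hx : ∀ i ≤ m, x + i ≠ 0) :
    ∑ i ∈ range (m + 1), (-1) ^ i * (m.choose i : K) / (x + i)
      = m ! / ∏ i ∈ range (m + 1), (x + i) := by
  induction m generalizing x with
  | zero => simp
  | succ m ih =>
    have hx' : ∀ i ≤ m, x + 1 + i ≠ 0 := fun i hi ↦ by
      simpa [add_assoc, add_comm (1 : K)] using hx (i + 1) (by omega)
    have hpascal : ∑ i ∈ range (m + 2), (-1) ^ i * ((m + 1).choose i : K) / (x + i)
        = ∑ i ∈ range (m + 1), (-1) ^ i * (m.choose i : K) / (x + i)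
          - ∑ i ∈ range (m + 1), (-1) ^ i * (m.choose i : K) / (x + 1 + i) := by
      calc _ = ∑ i ∈ range (m + 2), ((m + 1).choose i : K) * ((-1) ^ i / (x + i)) :=
            sum_congr rfl fun _ _ ↦ by ring
        _ = _ := sum_choose_succ_mul (fun i _ ↦ (-1) ^ i / (x + i)) m
        _ = _ := by
          rw [sub_eq_add_neg, ← sum_neg_distrib]
          congr 1 <;> refine sum_congr rfl fun i _ ↦ ?_ <;> push_cast <;> ring
    have hprod : ∏ i ∈ range (m + 2), (x + i) = x * ∏ i ∈ range (m + 1), (x + 1 + i) := by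
      rw [prod_range_succ']
      push_cast
      simp only [add_assoc, add_comm (1 : K), add_zero, mul_comm]
    have hprod' : x * ∏ i ∈ range (m + 1), (x + 1 + i)
        = (∏ i ∈ range (m + 1), (x + i)) * (x + m + 1) := by
      rw [← hprod, prod_range_succ]
      push_cast
      ring
    have hP : ∏ i ∈ range (m + 1), (x + i) ≠ 0 :=
      prod_ne_zero_iff.2 fun i hi ↦ hx i (by simp at hi; omega)
    have hQ : ∏ i ∈ range (m + 1), (x + 1 + i) ≠ 0 :=
      prod_ne_zero_iff.2 fun i hi ↦ hx' i (by simp at hi; omega)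
    have hx0 : x ≠ 0 := by simpa using hx 0 (by omega)
    rw [hpascal, ih fun i hi ↦ hx i (by omega), ih hx', hprod]
    field_simp
    push_cast [factorial_succ]
    linear_combination (m ! : K) * hprod'

theorem sum_range_neg_one_pow_mul_choose_div_two_mul_add_one {K : Type*} [Field K] [CharZero K]
    (m : ℕ) :
    ∑ i ∈ range (m + 1), (-1) ^ i * (m.choose i : K) / (2 * i + 1)
      = m ! / (2 * ∏ i ∈ range (m + 1), (1 / 2 + i : K)) := by
  have hne (i : ℕ) : (1 / 2 + i : K) ≠ 0 := by
    have : (2 * i + 1 : K) ≠ 0 := by exact_mod_cast Nat.succ_ne_zero (2 * i)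
    contrapose! this
    linear_combination 2 * this
  rw [mul_comm, ← div_div, ← sum_range_neg_one_pow_mul_choose_div m fun i _ ↦ hne i, sum_div]
  refine sum_congr rfl fun i _ ↦ ?_
  have := hne i
  field_simp
  ring

theorem Real.Gamma_nat_add_one_add_half_eq_sqrt_pi_mul_prod (m : ℕ) :
    Real.Gamma (m + 1 + 1 / 2) = √Real.pi * ∏ i ∈ range (m + 1), (1 / 2 + i : ℝ) := by
  induction m with
  | zero =>
    rw [show ((0 : ℕ) : ℝ) + 1 + 1 / 2 = 1 / 2 + 1 by norm_num,
      Real.Gamma_add_one (by norm_num), Real.Gamma_one_half_eq]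
    simp [mul_comm]
  | succ m ih =>
    rw [prod_range_succ, ← mul_assoc, ← ih, Nat.cast_succ, add_right_comm _ (1 : ℝ),
      Real.Gamma_add_one (by positivity)]
    ring

theorem exists_polynomial_eval_eq_sum_Icc_pow (K : Type*) [Field K] [CharZero K] (p : ℕ) :
    ∃ S : K[X], S.natDegree ≤ p + 1 ∧ S.coeff (p + 1) = (p + 1 : K)⁻¹ ∧
      ∀ n : ℕ, S.eval (n : K) = ∑ k ∈ Icc 1 n, (k : K) ^ p := by
  refine ⟨∑ i ∈ range (p + 1), C ((bernoulli' i * (p + 1).choose i / (p + 1) : ℚ) : K)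
    * X ^ (p + 1 - i), ?_, ?_, fun n ↦ ?_⟩
  · exact natDegree_sum_le_of_forall_le _ _ fun i _ ↦
      (natDegree_C_mul_X_pow_le _ _).trans (by omega)
  · rw [finsetSum_coeff, sum_eq_single 0]
    · simp
    · intro i hi hi0
      rw [coeff_C_mul_X_pow, if_neg (by simp at hi; omega)]
    · simp
  · have h := congrArg (Rat.cast : ℚ → K) (sum_Ico_pow n p)
    rw [Finset.Ico_add_one_right_eq_Icc] at h
    push_cast at h
    simpa [eval_finsetSum, div_mul_eq_mul_div] using h.symm

theorem exists_polynomial_eval_eq_sum_Icc_sq_sub_sq_pow (K : Type*) [Field K] [CharZero K]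
    (m : ℕ) :
    ∃ P : K[X], P.natDegree ≤ 2 * m + 1 ∧
      P.coeff (2 * m + 1) = ∑ i ∈ range (m + 1), (-1) ^ i * (m.choose i : K) / (2 * i + 1) ∧
      ∀ n : ℕ, P.eval (n : K) = ∑ k ∈ Icc 1 n, ((n : K) ^ 2 - (k : K) ^ 2) ^ m := by
  choose S hS_natDegree hS_coeff hS_eval using exists_polynomial_eval_eq_sum_Icc_pow K
  refine ⟨∑ i ∈ range (m + 1),
    C ((-1) ^ i * (m.choose i : K)) * (X ^ (2 * (m - i)) * S (2 * i)), ?_, ?_, fun n ↦ ?_⟩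
  · refine natDegree_sum_le_of_forall_le _ _ fun i hi ↦ ?_
    have hi : i ≤ m := by simp at hi; omega
    refine (natDegree_C_mul_le _ _).trans <| natDegree_mul_le.trans ?_
    have := hS_natDegree (2 * i)
    rw [natDegree_X_pow]
    omega
  · rw [finsetSum_coeff]
    refine sum_congr rfl fun i hi ↦ ?_
    have hi : i ≤ m := by simp at hi; omega
    rw [coeff_C_mul, coeff_X_pow_mul', if_pos (by omega),
      show 2 * m + 1 - 2 * (m - i) = 2 * i + 1 by omega, hS_coeff]
    push_cast
    ring
  · simp only [eval_finsetSum, eval_mul, eval_C, eval_pow, eval_X, hS_eval, mul_sum]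
    simp_rw [← neg_add_eq_sub, add_pow]
    rw [sum_comm]
    refine sum_congr rfl fun k _ ↦ sum_congr rfl fun i _ ↦ ?_
    rw [neg_pow, ← pow_mul]
    ring

theorem stmt_10 (a : ℕ) (ha : Odd a) :
    ∑ j ∈ Finset.range (a + 1), (a.choose j : ℝ) * (-1) ^ (j + 1)
        * ∑ k ∈ Finset.Icc 1 j, (((j : ℝ) - k) * ((j : ℝ) + k)) ^ ((a - 1) / 2)
      = (a.factorial : ℝ) * Real.sqrt Real.pi * (((a - 1) / 2 : ℕ).factorial : ℝ)
          / (2 * Real.Gamma ((a : ℝ) / 2 + 1)) := by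
  obtain ⟨m, rfl⟩ := ha
  rw [show (2 * m + 1 - 1) / 2 = m by omega]
  obtain ⟨P, hP_natDegree, hP_coeff, hP_eval⟩ :=
    exists_polynomial_eval_eq_sum_Icc_sq_sub_sq_pow ℝ m
  have hsign {j : ℕ} (hj : j ∈ range (2 * m + 1 + 1)) :
      (-1 : ℝ) ^ (j + 1) = (-1) ^ (2 * m + 1 - j) := by
    have := mem_range.1 hj
    rw [neg_one_pow_eq_pow_mod_two, neg_one_pow_eq_pow_mod_two (n := 2 * m + 1 - j)]
    congr 1
    omega
  calc _ = ∑ j ∈ range (2 * m + 1 + 1),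
        (-1) ^ (2 * m + 1 - j) * ((2 * m + 1).choose j : ℝ) * P.eval (j : ℝ) := by
        refine sum_congr rfl fun j hj ↦ ?_
        rw [hP_eval, hsign hj, mul_comm ((2 * m + 1).choose j : ℝ)]
        congr 1
        exact sum_congr rfl fun k _ ↦ by ring
    _ = _ := by
      rw [P.sum_range_neg_one_pow_mul_choose_mul_eval hP_natDegree, hP_coeff,
        sum_range_neg_one_pow_mul_choose_div_two_mul_add_one,
        show ((2 * m + 1 : ℕ) : ℝ) / 2 + 1 = m + 1 + 1 / 2 by push_cast; ring,
        Real.Gamma_nat_add_one_add_half_eq_sqrt_pi_mul_prod]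
      field_simp
end

section
/- For every non-negative integer b, the Stirling number of the second kind Stirling2(m, m−b), viewed as a function of the integer variable m (for m ≥ b), is a polynomial in m of degree 2b. -/
open Polynomial Finset in
lemma diff_pow_aux (n : ℕ) :
    ∃ B : Polynomial ℚ, (X + 1) ^ (n+1) = X ^ (n+1) + B ∧
      B.natDegree ≤ n ∧ B.coeff n = n + 1 := by
  refine ⟨∑ i ∈ Finset.range (n+1), C ((n+1).choose i : ℚ) * X ^ i, ?_, ?_, ?_⟩
  · rw [add_pow, Finset.sum_range_succ]
    simp [C_eq_natCast, mul_comm, add_comm]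
  · refine natDegree_sum_le_of_forall_le _ _ fun i hi => ?_
    refine (natDegree_C_mul_le _ _).trans ?_
    simpa using Nat.lt_succ_iff.mp (Finset.mem_range.mp hi)
  · rw [finset_sum_coeff]
    simp only [coeff_C_mul, coeff_X_pow]
    rw [Finset.sum_eq_single n]
    · simp [Nat.choose_succ_self_right]
    · intro i _ hne; simp [Ne.symm hne]
    · intro h; simp at h

open Polynomial Finset in
lemma sum_poly_aux (q : Polynomial ℚ) :
    ∃ P : Polynomial ℚ, (∀ n : ℕ, P.eval (n : ℚ) = ∑ j ∈ Finset.range n, q.eval (j : ℚ)) ∧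
      P.natDegree ≤ q.natDegree + 1 ∧
      P.coeff (q.natDegree + 1) = q.leadingCoeff / (q.natDegree + 1) := by
  suffices H : ∀ d (q : Polynomial ℚ), q.natDegree = d →
      ∃ P : Polynomial ℚ, (∀ n : ℕ, P.eval (n : ℚ) = ∑ j ∈ Finset.range n, q.eval (j : ℚ)) ∧
        P.natDegree ≤ q.natDegree + 1 ∧
        P.coeff (q.natDegree + 1) = q.leadingCoeff / (q.natDegree + 1) from H _ q rfl
  clear q
  intro d
  induction d using Nat.strong_induction_on with
  | _ d ih =>
  intro q hd
  subst hd
  set n := q.natDegree with hn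
  set c : ℚ := q.leadingCoeff / (n + 1) with hc
  set A : Polynomial ℚ := C c * X ^ (n+1) with hA
  have hn1 : ((n : ℚ) + 1) ≠ 0 := by positivity
  obtain ⟨B, hB, hBdeg, hBcoeff⟩ := diff_pow_aux n
  have hΔ : A.comp (X + 1) - A = C c * B := by
    rw [hA]; simp only [mul_comp, C_comp, pow_comp, X_comp]
    rw [hB]; ring
  set r : Polynomial ℚ := q - (A.comp (X + 1) - A) with hr
  have hrdeg : r.natDegree ≤ n := by
    refine (natDegree_sub_le _ _).trans (max_le le_rfl ?_)
    rw [hΔ]; exact (natDegree_C_mul_le _ _).trans hBdeg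
  have hrcoeff : r.coeff n = 0 := by
    rw [hr, coeff_sub, hΔ, coeff_C_mul, hBcoeff, hc]
    rw [div_mul_cancel₀ _ hn1, Polynomial.leadingCoeff, ← hn, sub_self]
  -- obtain Q for r
  obtain ⟨Q, hQev, hQdeg⟩ :
      ∃ Q : Polynomial ℚ, (∀ m : ℕ, Q.eval (m : ℚ) = ∑ j ∈ Finset.range m, r.eval (j : ℚ)) ∧
        Q.natDegree ≤ n := by
    by_cases hr0 : r = 0
    · exact ⟨0, fun m => by simp [hr0], by simp⟩
    · have hlt : r.natDegree < n := by
        rcases lt_or_eq_of_le hrdeg with h | h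
        · exact h
        · exact absurd (h ▸ hrcoeff) (by simpa [leadingCoeff, h] using leadingCoeff_ne_zero.mpr hr0)
      obtain ⟨Q, h1, h2, _⟩ := ih r.natDegree hlt r rfl
      exact ⟨Q, h1, h2.trans hlt⟩
  refine ⟨A + Q, ?_, ?_, ?_⟩
  · intro m
    have htel : ∑ j ∈ Finset.range m, (A.comp (X+1) - A).eval (j:ℚ) = A.eval (m:ℚ) := by
      have := Finset.sum_range_sub (fun j : ℕ => A.eval (j:ℚ)) m
      push_cast at this
      simp only [eval_sub, eval_comp, eval_add, eval_X, eval_one]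
      rw [this]
      simp [hA]
    have : ∑ j ∈ Finset.range m, r.eval (j:ℚ)
        = ∑ j ∈ Finset.range m, q.eval (j:ℚ) - A.eval (m:ℚ) := by
      rw [← htel, ← Finset.sum_sub_distrib]
      exact Finset.sum_congr rfl fun j _ => by rw [hr, eval_sub]
    rw [eval_add, hQev, this]; ring
  · refine (natDegree_add_le _ _).trans (max_le ?_ (hQdeg.trans (Nat.le_succ n)))
    exact (natDegree_C_mul_le _ _).trans (by simp)
  · rw [coeff_add, coeff_eq_zero_of_natDegree_lt (lt_of_le_of_lt hQdeg (Nat.lt_succ_self n))]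
    simp [hA, coeff_C_mul, coeff_X_pow, hc]

/-- Stirling numbers of the second kind. -/
def stirling2 : ℕ → ℕ → ℕ
  | 0, 0 => 1
  | 0, _ + 1 => 0
  | _ + 1, 0 => 0
  | n + 1, k + 1 => (k + 1) * stirling2 n (k + 1) + stirling2 n k

lemma stirling2_eq_zero_of_lt : ∀ {n k : ℕ}, n < k → stirling2 n k = 0
  | 0, _ + 1, _ => rfl
  | n + 1, k + 1, h => by
    have h' : n < k + 1 := Nat.lt_of_succ_lt_succ h |>.trans (Nat.lt_succ_self k)
    rw [stirling2, stirling2_eq_zero_of_lt h',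
      stirling2_eq_zero_of_lt (Nat.lt_of_succ_lt_succ h)]
    simp

lemma stirling2_self : ∀ n : ℕ, stirling2 n n = 1
  | 0 => rfl
  | n + 1 => by
    rw [stirling2, stirling2_self n, stirling2_eq_zero_of_lt (Nat.lt_succ_self n)]
    simp

open Polynomial Finset in
lemma stirling2_key (b : ℕ) : ∃ p : Polynomial ℚ, p.natDegree ≤ 2*b ∧ 0 < p.coeff (2*b) ∧
    ∀ m : ℕ, b ≤ m → p.eval (m : ℚ) = (stirling2 m (m - b) : ℚ) := by
  induction b with
  | zero =>
    exact ⟨1, by simp, by simp, fun m _ => by simp [stirling2_self]⟩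
  | succ b ih =>
    obtain ⟨p, hdeg, hpos, hev⟩ := ih
    have hp0 : p ≠ 0 := fun h => by simp [h] at hpos
    have hpd : p.natDegree = 2*b := le_antisymm hdeg (le_natDegree_of_ne_zero hpos.ne')
    set q : Polynomial ℚ := (X - C (b : ℚ)) * p with hq
    have hX0 : (X - C (b:ℚ)) ≠ 0 := X_sub_C_ne_zero (b:ℚ)
    have hqd : q.natDegree = 2*b + 1 := by
      rw [hq, natDegree_mul hX0 hp0, natDegree_X_sub_C, hpd]; omega
    have hqlc : q.leadingCoeff = p.coeff (2*b) := by
      rw [hq, leadingCoeff_mul, leadingCoeff_X_sub_C, one_mul, leadingCoeff, hpd]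
    obtain ⟨P, hPev, hPdeg, hPcoeff⟩ := sum_poly_aux q
    refine ⟨P - C (P.eval ((b:ℚ)+1)), ?_, ?_, ?_⟩
    · refine (natDegree_sub_le _ _).trans (max_le ?_ (by simp))
      rw [hqd] at hPdeg; omega
    · have h2 : 2 * (b + 1) = q.natDegree + 1 := by omega
      rw [coeff_sub, h2, hPcoeff, coeff_C, if_neg (by omega), sub_zero, hqlc, hqd]
      positivity
    · intro m hm
      induction m, hm using Nat.le_induction with
      | base =>
        have : b + 1 - (b + 1) = 0 := by omega
        rw [this]
        show _ = ((stirling2 (b+1) 0 : ℕ) : ℚ)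
        rw [show stirling2 (b+1) 0 = 0 from rfl]
        simp
      | succ m hm ihm =>
        have hdiff : P.eval ((m:ℚ)+1) - P.eval (m:ℚ) = q.eval (m:ℚ) := by
          have h1 := hPev (m+1)
          have h2 := hPev m
          push_cast at h1
          rw [h1, h2, Finset.sum_range_succ]; ring
        have hmb : m - (b+1) + 1 = m - b := by omega
        have hrec : (stirling2 (m+1) (m - b) : ℚ)
            = ((m:ℚ) - b) * stirling2 m (m - b) + stirling2 m (m - (b+1)) := by
          rw [← hmb, stirling2]
          push_cast [Nat.cast_sub (by omega : b + 1 ≤ m)]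
          ring
        have hsub : (m + 1 : ℕ) - (b+1) = m - b := by omega
        rw [hsub, hrec, ← ihm]
        have hqev : q.eval (m:ℚ) = ((m:ℚ) - b) * stirling2 m (m - b) := by
          rw [hq, eval_mul, eval_sub, eval_X, eval_C, hev m (by omega)]
        push_cast
        rw [eval_sub, eval_sub, eval_C, eval_C]
        linarith [hdiff, hqev]

theorem stmt_18 (b : ℕ) :
    ∃ p : Polynomial ℚ, p.natDegree = 2 * b ∧
      ∀ m : ℕ, b ≤ m → p.eval (m : ℚ) = (stirling2 m (m - b) : ℚ) := by
  obtain ⟨p, hdeg, hpos, hev⟩ := stirling2_key b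
  exact ⟨p, le_antisymm hdeg (Polynomial.le_natDegree_of_ne_zero hpos.ne'), hev⟩
end
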